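/- arXiv:2207.08933 — 2 statements merged into one kernel-verified Lean document; each statement's English description precedes it below -/
import Mathlib

section
/- (Two-parameter orthogonal maximal inequality) Let y(i,j), 1 ≤ i ≤ M, 1 ≤ j ≤ L, be mean-zero random variables that are pairwise uncorrelated: E[y(i,j)y(i',j')] = 0 unless (i,j) = (i',j'), with E[y(i,j)²] ≤ v. Then E[ max_{m₁ ≤ k ≤ m₂} ( ∑_{i=1}^k ∑_{j=1}^{N−k} y(i, N−j+1) )² ] ≤ [log₂(4m₁) log₂(4(N−m₁))]² · m₂ (N − m₁) · v, for any integers 1 ≤ m₁ < m₂ ≤ N−1, where y(i,j) is set to 0 outside the index range. -/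
/-!
Put `U k = ∑ y i j` over the corner `[1, k] × [k + 1, N]`; after `j ↦ N - j + 1` the sum in the
statement is `U k`. Two corners `a` and `a + d` differ in at most `d (N - d)` cells, so by
orthogonality `E (U (a + d) - U a)² ≤ d (N - d) v`. For `m₁ ≤ k ≤ m₂`, `U k - U m₁` telescopes along
the binary truncations of `k - m₁`, one dyadic block per scale; Cauchy–Schwarz over the
`K = ⌊log₂ (m₂ - m₁)⌋ + 1` scales bounds it by `K` times the sum of all squared dyadic increments,
whose expectation is at most `K (m₂ - m₁) N v` because each scale tiles `[0, m₂ - m₁]` once.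
Together with `U k² ≤ 2 U m₁² + 2 (U k - U m₁)²` this gives the maximal inequality.
-/

open MeasureTheory Finset

section Orthogonal

variable {Ω ι : Type*} [MeasurableSpace Ω] {μ : Measure Ω} {y : ι → Ω → ℝ}

theorem integral_sq_sum_mul_of_orthogonal (hL2 : ∀ p, MemLp (y p) 2 μ)
    (horth : Pairwise fun p q => ∫ ω, y p ω * y q ω ∂μ = 0) (H : Finset ι) (c : ι → ℝ) :
    ∫ ω, (∑ p ∈ H, c p * y p ω) ^ 2 ∂μ = ∑ p ∈ H, c p ^ 2 * ∫ ω, y p ω ^ 2 ∂μ := by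
  have hint : ∀ p q, Integrable (fun ω => c p * c q * (y p ω * y q ω)) μ :=
    fun p q => ((hL2 p).integrable_mul (hL2 q)).const_mul _
  calc ∫ ω, (∑ p ∈ H, c p * y p ω) ^ 2 ∂μ
      = ∫ ω, ∑ p ∈ H, ∑ q ∈ H, c p * c q * (y p ω * y q ω) ∂μ := by
        congr 1 with ω
        rw [sq, sum_mul_sum]
        exact sum_congr rfl fun p _ => sum_congr rfl fun q _ => by ring
    _ = ∑ p ∈ H, ∑ q ∈ H, c p * c q * ∫ ω, y p ω * y q ω ∂μ := by
        rw [integral_finsetSum _ fun p _ => integrable_finsetSum _ fun q _ => hint p q]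
        refine sum_congr rfl fun p _ => ?_
        rw [integral_finsetSum _ fun q _ => hint p q]
        simp only [integral_const_mul]
    _ = ∑ p ∈ H, c p ^ 2 * ∫ ω, y p ω ^ 2 ∂μ := by
        refine sum_congr rfl fun p hp => ?_
        rw [sum_eq_single_of_mem p hp fun q _ hqp => by rw [horth hqp.symm, mul_zero]]
        simp only [sq]

theorem integral_sq_sum_sub_sum_le [DecidableEq ι] (hL2 : ∀ p, MemLp (y p) 2 μ)
    (horth : Pairwise fun p q => ∫ ω, y p ω * y q ω ∂μ = 0) {v : ℝ}
    (hvar : ∀ p, ∫ ω, y p ω ^ 2 ∂μ ≤ v) (F G : Finset ι) :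
    ∫ ω, (∑ p ∈ F, y p ω - ∑ p ∈ G, y p ω) ^ 2 ∂μ ≤ (#(F \ G) + #(G \ F)) * v := by
  set c : ι → ℝ := fun p => if p ∈ F then 1 else -1
  have hsign : ∀ ω, ∑ p ∈ F, y p ω - ∑ p ∈ G, y p ω = ∑ p ∈ F \ G ∪ G \ F, c p * y p ω := by
    intro ω
    rw [← sum_sdiff_sub_sum_sdiff, sum_union disjoint_sdiff_sdiff, sub_eq_add_neg,
      ← sum_neg_distrib]
    congr 1 <;> refine sum_congr rfl fun p hp => ?_ <;> simp_all [c]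
  calc ∫ ω, (∑ p ∈ F, y p ω - ∑ p ∈ G, y p ω) ^ 2 ∂μ
      = ∑ p ∈ F \ G ∪ G \ F, ∫ ω, y p ω ^ 2 ∂μ := by
        simp_rw [hsign, integral_sq_sum_mul_of_orthogonal hL2 horth]
        refine sum_congr rfl fun p _ => ?_
        by_cases hp : p ∈ F <;> simp [c, hp]
    _ ≤ ∑ p ∈ F \ G ∪ G \ F, v := sum_le_sum fun p _ => hvar p
    _ = (#(F \ G) + #(G \ F)) * v := by
        rw [sum_const, card_union_of_disjoint disjoint_sdiff_sdiff, nsmul_eq_mul, Nat.cast_add]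

end Orthogonal

section Dyadic

def dyadicSquareSum (f : ℕ → ℝ) (n K : ℕ) : ℝ :=
  ∑ ℓ ∈ range K, ∑ q ∈ range (n / 2 ^ ℓ), (f (2 ^ ℓ * (q + 1)) - f (2 ^ ℓ * q)) ^ 2

lemma sq_dyadic_truncation_step_le (f : ℕ → ℝ) {κ n : ℕ} (hκ : κ ≤ n) (ℓ : ℕ) :
    (f (2 ^ ℓ * (κ / 2 ^ ℓ)) - f (2 ^ (ℓ + 1) * (κ / 2 ^ (ℓ + 1)))) ^ 2 ≤
      ∑ q ∈ range (n / 2 ^ ℓ), (f (2 ^ ℓ * (q + 1)) - f (2 ^ ℓ * q)) ^ 2 := by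
  have hnext : 2 ^ (ℓ + 1) * (κ / 2 ^ (ℓ + 1)) = 2 ^ ℓ * (2 * (κ / 2 ^ ℓ / 2)) := by
    rw [pow_succ, ← Nat.div_div_eq_div_mul, mul_assoc]
  have hle : κ / 2 ^ ℓ ≤ n / 2 ^ ℓ := Nat.div_le_div_right hκ
  rw [hnext]
  obtain ⟨p, hp | hp⟩ := Nat.even_or_odd' (κ / 2 ^ ℓ)
  · rw [hp, Nat.mul_div_cancel_left p two_pos, sub_self, sq, zero_mul]
    exact sum_nonneg fun q _ => sq_nonneg _
  · have hp2 : (2 * p + 1) / 2 = p := by omega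
    rw [hp, hp2]
    exact single_le_sum (f := fun q => (f (2 ^ ℓ * (q + 1)) - f (2 ^ ℓ * q)) ^ 2)
      (fun q _ => sq_nonneg _) (mem_range.2 (by omega))

theorem sq_sub_le_mul_dyadicSquareSum (f : ℕ → ℝ) {κ n K : ℕ} (hκ : κ ≤ n) (hK : n < 2 ^ K) :
    (f κ - f 0) ^ 2 ≤ K * dyadicSquareSum f n K := by
  -- `c ℓ` is `κ` with its `ℓ` lowest binary digits cleared
  set c : ℕ → ℕ := fun ℓ => 2 ^ ℓ * (κ / 2 ^ ℓ)
  have htelescope : f κ - f 0 = ∑ ℓ ∈ range K, (f (c ℓ) - f (c (ℓ + 1))) := by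
    rw [sum_range_sub']
    simp [c, Nat.div_eq_of_lt (hκ.trans_lt hK)]
  calc (f κ - f 0) ^ 2 ≤ #(range K) * ∑ ℓ ∈ range K, (f (c ℓ) - f (c (ℓ + 1))) ^ 2 := by
        rw [htelescope]; exact sq_sum_le_card_mul_sum_sq
    _ ≤ K * dyadicSquareSum f n K := by
        rw [card_range, dyadicSquareSum]
        gcongr with ℓ
        exact sq_dyadic_truncation_step_le f hκ ℓ

variable {Ω : Type*} [MeasurableSpace Ω] {μ : Measure Ω} {X : ℕ → Ω → ℝ}

lemma integrable_dyadicSquareSum (hX : ∀ k, MemLp (X k) 2 μ) (n K : ℕ) :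
    Integrable (fun ω => dyadicSquareSum (fun k => X k ω) n K) μ :=
  integrable_finsetSum _ fun _ _ => integrable_finsetSum _ fun _ _ =>
    ((hX _).sub (hX _)).integrable_sq

theorem integral_dyadicSquareSum_le (hX : ∀ k, MemLp (X k) 2 μ) {n : ℕ} {C : ℝ} (hC : 0 ≤ C)
    (hinc : ∀ a d, a + d ≤ n → ∫ ω, (X (a + d) ω - X a ω) ^ 2 ∂μ ≤ d * C) (K : ℕ) :
    ∫ ω, dyadicSquareSum (fun k => X k ω) n K ∂μ ≤ K * (n * C) := by
  have hint : ∀ ℓ q, Integrable (fun ω => (X (2 ^ ℓ * (q + 1)) ω - X (2 ^ ℓ * q) ω) ^ 2) μ :=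
    fun ℓ q => ((hX _).sub (hX _)).integrable_sq
  have hlevel : ∀ ℓ, ∑ q ∈ range (n / 2 ^ ℓ),
      ∫ ω, (X (2 ^ ℓ * (q + 1)) ω - X (2 ^ ℓ * q) ω) ^ 2 ∂μ ≤ n * C := by
    intro ℓ
    calc ∑ q ∈ range (n / 2 ^ ℓ), ∫ ω, (X (2 ^ ℓ * (q + 1)) ω - X (2 ^ ℓ * q) ω) ^ 2 ∂μ
        ≤ ∑ q ∈ range (n / 2 ^ ℓ), (2 ^ ℓ : ℕ) * C := by
          refine sum_le_sum fun q hq => ?_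
          rw [mul_add_one]
          refine hinc _ _ ?_
          calc 2 ^ ℓ * q + 2 ^ ℓ = 2 ^ ℓ * (q + 1) := (mul_add_one _ _).symm
            _ ≤ 2 ^ ℓ * (n / 2 ^ ℓ) := Nat.mul_le_mul_left _ (mem_range.1 hq)
            _ ≤ n := Nat.mul_div_le n _
      _ ≤ n * C := by
          rw [sum_const, card_range, nsmul_eq_mul, ← mul_assoc, ← Nat.cast_mul]
          gcongr
          exact_mod_cast Nat.div_mul_le_self n _
  calc ∫ ω, dyadicSquareSum (fun k => X k ω) n K ∂μ
      = ∑ ℓ ∈ range K, ∑ q ∈ range (n / 2 ^ ℓ),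
          ∫ ω, (X (2 ^ ℓ * (q + 1)) ω - X (2 ^ ℓ * q) ω) ^ 2 ∂μ := by
        simp only [dyadicSquareSum]
        rw [integral_finsetSum _ fun ℓ _ => integrable_finsetSum _ fun q _ => hint ℓ q]
        exact sum_congr rfl fun ℓ _ => integral_finsetSum _ fun q _ => hint ℓ q
    _ ≤ ∑ ℓ ∈ range K, n * C := sum_le_sum fun ℓ _ => hlevel ℓ
    _ = K * (n * C) := by rw [sum_const, card_range, nsmul_eq_mul]

theorem integral_iSup_sq_le_of_increments (hX : ∀ k, MemLp (X k) 2 μ) {a b K : ℕ} (hab : a ≤ b)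
    (hK : b - a < 2 ^ K) {C : ℝ} (hC : 0 ≤ C)
    (hinc : ∀ c d, a ≤ c → c + d ≤ b → ∫ ω, (X (c + d) ω - X c ω) ^ 2 ∂μ ≤ d * C) :
    ∫ ω, ⨆ k ∈ Icc a b, X k ω ^ 2 ∂μ ≤ 2 * ∫ ω, X a ω ^ 2 ∂μ + 2 * K ^ 2 * ((b - a : ℕ) * C) := by
  set S : Ω → ℝ := fun ω => dyadicSquareSum (fun κ => X (a + κ) ω) (b - a) K
  have hS : Integrable S μ := integrable_dyadicSquareSum (fun κ => hX (a + κ)) _ K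
  have hSle : ∫ ω, S ω ∂μ ≤ K * ((b - a : ℕ) * C) :=
    integral_dyadicSquareSum_le (fun κ => hX (a + κ)) hC
      (fun c d h => by simpa only [add_assoc] using hinc (a + c) d (by omega) (by omega)) K
  have hpointwise : ∀ ω, ⨆ k ∈ Icc a b, X k ω ^ 2 ≤ 2 * X a ω ^ 2 + 2 * K * S ω := by
    intro ω
    have hS0 : 0 ≤ S ω := sum_nonneg fun ℓ _ => sum_nonneg fun q _ => sq_nonneg _
    refine Real.iSup_le (fun k => Real.iSup_le (fun hk => ?_) (by positivity)) (by positivity)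
    obtain ⟨hak, hkb⟩ := mem_Icc.1 hk
    have hchain := sq_sub_le_mul_dyadicSquareSum (fun κ => X (a + κ) ω)
      (show k - a ≤ b - a by omega) hK
    simp only [add_zero, Nat.add_sub_cancel' hak] at hchain
    nlinarith [sq_nonneg (X k ω - 2 * X a ω)]
  calc ∫ ω, ⨆ k ∈ Icc a b, X k ω ^ 2 ∂μ ≤ ∫ ω, 2 * X a ω ^ 2 + 2 * K * S ω ∂μ :=
        integral_mono_of_nonneg
          (ae_of_all _ fun ω => Real.iSup_nonneg fun k => Real.iSup_nonneg fun _ => sq_nonneg _)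
          (((hX a).integrable_sq.const_mul 2).add (hS.const_mul _)) (ae_of_all _ hpointwise)
    _ = 2 * ∫ ω, X a ω ^ 2 ∂μ + 2 * K * ∫ ω, S ω ∂μ := by
        rw [integral_add ((hX a).integrable_sq.const_mul 2) (hS.const_mul _),
          integral_const_mul, integral_const_mul]
    _ ≤ 2 * ∫ ω, X a ω ^ 2 ∂μ + 2 * K ^ 2 * ((b - a : ℕ) * C) := by
        rw [sq, mul_assoc 2 (K : ℝ), mul_assoc 2 (K * K : ℝ), mul_assoc (K : ℝ)]
        gcongr

end Dyadic

section Corner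

def corner (N k : ℕ) : Finset (ℕ × ℕ) := Icc 1 k ×ˢ Icc (k + 1) N

lemma sum_corner_eq_sum_sum {M : Type*} [AddCommMonoid M] (z : ℕ → ℕ → M) (N k : ℕ) :
    ∑ p ∈ corner N k, z p.1 p.2 = ∑ i ∈ Icc 1 k, ∑ j ∈ Icc 1 (N - k), z i (N - j + 1) := by
  rw [corner, sum_product]
  refine sum_congr rfl fun i _ =>
    (sum_nbij' (fun j => N - j + 1) (fun j => N - j + 1) ?_ ?_ ?_ ?_ fun _ _ => rfl).symm
  all_goals intro j hj; simp only [mem_Icc] at hj ⊢; omega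

lemma card_corner_sdiff_add_card_sdiff_corner_le {N a d : ℕ} (h : a + d ≤ N) :
    #(corner N (a + d) \ corner N a) + #(corner N a \ corner N (a + d)) ≤ d * (N - d) := by
  have hgain : #(corner N (a + d) \ corner N a) ≤ d * (N - (a + d)) := by
    refine (card_le_card (t := Icc (a + 1) (a + d) ×ˢ Icc (a + d + 1) N) fun p hp => ?_).trans_eq ?_
    · simp only [corner, mem_sdiff, mem_product, mem_Icc] at hp ⊢
      omega
    · rw [card_product, Nat.card_Icc, Nat.card_Icc]
      congr 1 <;> omega
  have hloss : #(corner N a \ corner N (a + d)) ≤ a * d := by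
    refine (card_le_card (t := Icc 1 a ×ˢ Icc (a + 1) (a + d)) fun p hp => ?_).trans_eq ?_
    · simp only [corner, mem_sdiff, mem_product, mem_Icc] at hp ⊢
      omega
    · rw [card_product, Nat.card_Icc, Nat.card_Icc]
      congr 1; omega
  calc _ ≤ d * (N - (a + d)) + a * d := add_le_add hgain hloss
    _ = d * (N - d) := by
        rw [mul_comm a, ← mul_add]; congr 1; omega

lemma integral_sq_sum_corner_sub_le {Ω : Type*} [MeasurableSpace Ω] {μ : Measure Ω}
    {y : ℕ → ℕ → Ω → ℝ} (hL2 : ∀ i j, MemLp (y i j) 2 μ)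
    (horth : ∀ i j i' j', (i, j) ≠ (i', j') → ∫ ω, y i j ω * y i' j' ω ∂μ = 0) {v : ℝ}
    (hv : 0 ≤ v) (hvar : ∀ i j, ∫ ω, (y i j ω) ^ 2 ∂μ ≤ v) {N a d : ℕ} (h : a + d ≤ N) :
    ∫ ω, (∑ p ∈ corner N (a + d), y p.1 p.2 ω - ∑ p ∈ corner N a, y p.1 p.2 ω) ^ 2 ∂μ
      ≤ d * (N - d : ℕ) * v := by
  refine (integral_sq_sum_sub_sum_le (y := fun p : ℕ × ℕ => y p.1 p.2) (fun p => hL2 _ _)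
    (fun p q hpq => horth _ _ _ _ hpq) (fun p => hvar _ _) _ _).trans ?_
  rw [← Nat.cast_add, ← Nat.cast_mul]
  gcongr
  exact card_corner_sdiff_add_card_sdiff_corner_le h

end Corner

lemma natLog_add_one_le_logb_two_mul {n : ℕ} (hn : 1 ≤ n) {x : ℝ} (hx : (n : ℝ) ≤ x) :
    ((Nat.log 2 n + 1 : ℕ) : ℝ) ≤ Real.logb 2 (2 * x) := by
  have hn' : (0 : ℝ) < n := by exact_mod_cast hn
  have hlog := Real.natLog_le_logb n 2
  have hmono := Real.logb_le_logb_of_le one_lt_two hn' hx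
  rw [Real.logb_mul two_ne_zero (by linarith), Real.logb_self_eq_one one_lt_two]
  push_cast at hlog ⊢
  linarith

lemma chaining_constant_le {m₁ m₂ N : ℕ} (hm₁ : 1 ≤ m₁) (hm : m₁ < m₂) (hm₂ : m₂ ≤ N - 1) :
    2 * ((m₁ : ℝ) * (N - m₁ : ℕ))
        + 2 * ((Nat.log 2 (m₂ - m₁) + 1 : ℕ) : ℝ) ^ 2 * ((m₂ - m₁ : ℕ) * N)
      ≤ (Real.logb 2 (4 * m₁) * Real.logb 2 (4 * (N - m₁ : ℕ))) ^ 2 * m₂ * (N - m₁ : ℕ) := by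
  set R : ℝ := ((N - m₁ : ℕ) : ℝ)
  set β := Real.logb 2 (2 * R)
  have hR : 1 ≤ R := by simp only [R]; exact_mod_cast (by omega : 1 ≤ N - m₁)
  have hK : ((Nat.log 2 (m₂ - m₁) + 1 : ℕ) : ℝ) ≤ β :=
    natLog_add_one_le_logb_two_mul (by omega) (by simp only [R]; exact_mod_cast (by omega))
  have hβ : 1 ≤ β := by
    rw [Real.le_logb_iff_rpow_le one_lt_two (by positivity)]; norm_num; linarith
  have hα : 2 ≤ Real.logb 2 (4 * m₁) := by
    rw [Real.le_logb_iff_rpow_le one_lt_two (by positivity)]; norm_num; exact_mod_cast hm₁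
  have h4R : Real.logb 2 (4 * R) = 1 + β := by
    rw [show 4 * R = 2 * (2 * R) by ring, Real.logb_mul two_ne_zero (by positivity),
      Real.logb_self_eq_one one_lt_two]
  have hm₁m₂ : (m₁ : ℝ) * R ≤ m₂ * R := by gcongr
  have hnN : ((m₂ - m₁ : ℕ) : ℝ) * N ≤ m₂ * R := by
    simp only [R]; exact_mod_cast (show (m₂ - m₁) * N ≤ m₂ * (N - m₁) by
      have := Nat.mul_le_mul_left m₁ (show m₂ ≤ N by omega)
      zify [hm.le, (by omega : m₁ ≤ N)] at this ⊢; nlinarith)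
  rw [h4R]
  calc 2 * ((m₁ : ℝ) * R) + 2 * ((Nat.log 2 (m₂ - m₁) + 1 : ℕ) : ℝ) ^ 2 * ((m₂ - m₁ : ℕ) * N)
      ≤ 2 * (m₂ * R) + 2 * β ^ 2 * (m₂ * R) := by gcongr
    _ ≤ 2 ^ 2 * (1 + β) ^ 2 * (m₂ * R) := by rw [← add_mul]; gcongr; nlinarith
    _ ≤ (Real.logb 2 (4 * m₁) * (1 + β)) ^ 2 * m₂ * R := by
        rw [mul_pow, mul_assoc _ (m₂ : ℝ)]; gcongr

theorem stmt_4_general {Ω : Type*} [MeasurableSpace Ω] (μ : Measure Ω)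
    (N m₁ m₂ : ℕ) (hm₁ : 1 ≤ m₁) (hm : m₁ < m₂) (hm₂ : m₂ ≤ N - 1)
    (y : ℕ → ℕ → Ω → ℝ) (v : ℝ) (hv : 0 < v)
    (hL2 : ∀ i j, MemLp (y i j) 2 μ)
    (horth : ∀ i j i' j', (i, j) ≠ (i', j') → ∫ ω, y i j ω * y i' j' ω ∂μ = 0)
    (hvar : ∀ i j, ∫ ω, (y i j ω) ^ 2 ∂μ ≤ v) :
    ∫ ω, (⨆ k ∈ Finset.Icc m₁ m₂,
        (∑ i ∈ Finset.Icc 1 k, ∑ j ∈ Finset.Icc 1 (N - k), y i (N - j + 1) ω) ^ 2) ∂μ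
      ≤ (Real.logb 2 (4 * m₁) * Real.logb 2 (4 * (N - m₁ : ℕ))) ^ 2
          * m₂ * ((N - m₁ : ℕ) : ℝ) * v := by
  set U : ℕ → Ω → ℝ := fun k ω => ∑ p ∈ corner N k, y p.1 p.2 ω
  have hinc : ∀ a d, a + d ≤ N → ∫ ω, (U (a + d) ω - U a ω) ^ 2 ∂μ ≤ d * (N - d : ℕ) * v :=
    fun a d h => integral_sq_sum_corner_sub_le hL2 horth hv.le hvar h
  have hstart : ∫ ω, U m₁ ω ^ 2 ∂μ ≤ m₁ * (N - m₁ : ℕ) * v := by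
    simpa [U, corner] using hinc 0 m₁ (by omega)
  have hmax := integral_iSup_sq_le_of_increments (X := U)
    (fun k => memLp_finsetSum _ fun p _ => hL2 _ _) hm.le (Nat.lt_pow_succ_log_self one_lt_two _)
    (mul_nonneg N.cast_nonneg hv.le) fun c d _ h => (hinc c d (by omega)).trans <| by
      rw [mul_assoc]; gcongr; exact Nat.sub_le N d
  have hU : ∀ k ω, ∑ i ∈ Icc 1 k, ∑ j ∈ Icc 1 (N - k), y i (N - j + 1) ω = U k ω :=
    fun k ω => (sum_corner_eq_sum_sum (fun i j => y i j ω) N k).symm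
  simp_rw [hU]
  calc _ ≤ _ := hmax
    _ ≤ 2 * (m₁ * (N - m₁ : ℕ) * v) + 2 * ((Nat.log 2 (m₂ - m₁) + 1 : ℕ) : ℝ) ^ 2
          * ((m₂ - m₁ : ℕ) * (N * v)) := by gcongr
    _ = (2 * ((m₁ : ℝ) * (N - m₁ : ℕ)) + 2 * ((Nat.log 2 (m₂ - m₁) + 1 : ℕ) : ℝ) ^ 2
          * ((m₂ - m₁ : ℕ) * N)) * v := by ring
    _ ≤ _ := by gcongr; exact chaining_constant_le hm₁ hm hm₂

theorem stmt_4 {Ω : Type*} [MeasurableSpace Ω] (μ : Measure Ω) [IsProbabilityMeasure μ]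
    (N M L m₁ m₂ : ℕ) (hm₁ : 1 ≤ m₁) (hm : m₁ < m₂) (hm₂ : m₂ ≤ N - 1)
    (hM : m₂ ≤ M) (hL : N - m₁ ≤ L)
    (y : ℕ → ℕ → Ω → ℝ) (v : ℝ) (hv : 0 < v)
    (hzero : ∀ i j, (i = 0 ∨ M < i ∨ j = 0 ∨ L < j) → y i j = 0)
    (hL2 : ∀ i j, MemLp (y i j) 2 μ)
    (hmean : ∀ i j, ∫ ω, y i j ω ∂μ = 0)
    (horth : ∀ i j i' j', (i, j) ≠ (i', j') → ∫ ω, y i j ω * y i' j' ω ∂μ = 0)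
    (hvar : ∀ i j, ∫ ω, (y i j ω) ^ 2 ∂μ ≤ v) :
    ∫ ω, (⨆ k ∈ Finset.Icc m₁ m₂,
        (∑ i ∈ Finset.Icc 1 k, ∑ j ∈ Finset.Icc 1 (N - k), y i (N - j + 1) ω) ^ 2) ∂μ
      ≤ (Real.logb 2 (4 * m₁) * Real.logb 2 (4 * (N - m₁ : ℕ))) ^ 2
          * m₂ * ((N - m₁ : ℕ) : ℝ) * v :=
  stmt_4_general μ N m₁ m₂ hm₁ hm hm₂ y v hv hL2 horth hvar
end

section
/- Let 0 < η < 1, and suppose real sequences μ₁, μ₂, μ₁₂ (indexed by N,d) satisfy μ₁₂ − max{μ₁, μ₂} ≫ |μ₁ − μ₂| ≥ 0 and μ₁₂ > 0 with μ₁₂/max{μ₁,μ₂} → ∞. Define q_Z(t) = [η² − 1_{t≤η}(1 − (1−η)/(1−t))](μ₁₂ − μ₁) + [(1−η)² − 1_{t>η}(1 − η/t)](μ₁₂ − μ₂) for t ∈ (0,1). Then for all sufficiently large N, d, the unique maximizer of |q_Z(t)| over t ∈ [0,1] is t = η. -/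
open Filter

-- case t < η
private lemma case_lt (η t a b c d : ℝ) (hη0 : 0 < η) (hη1 : η < 1)
    (ht0 : 0 ≤ t) (ht : t < η)
    (ha : a ≤ max a b) (hb : b ≤ max a b)
    (hd1 : a - b ≤ d) (hd2 : b - a ≤ d)
    (hcm : 0 < c - max a b)
    (hdom : 32/7 * d ≤ c - max a b) :
    |(η ^ 2 - (1 - (1 - η) / (1 - t))) * (c - a) + ((1 - η) ^ 2 - 0) * (c - b)|
      < η ^ 2 * (c - a) + (1 - η) ^ 2 * (c - b) := by
  set r := (1 - η) / (1 - t) with hr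
  have h1t : 0 < 1 - t := by linarith
  have hr1 : 1 - η ≤ r := by rw [hr, le_div_iff₀ h1t]; nlinarith
  have hr2 : r < 1 := by rw [hr, div_lt_one h1t]; linarith
  have hca : 0 < c - a := by have := le_max_left a b; linarith
  have hcb : 0 < c - b := by have := le_max_right a b; linarith
  rw [abs_lt]
  constructor
  · nlinarith [mul_nonneg (by linarith : (0:ℝ) ≤ r - (1 - η)) hca.le,
      mul_nonneg (by nlinarith : (0:ℝ) ≤ 1 - (2*η^2 - η)) (by linarith : (0:ℝ) ≤ d - (b - a)),
      mul_nonneg (by nlinarith : (0:ℝ) ≤ 1 + (2*η^2 - η)) (by linarith : (0:ℝ) ≤ d + (b - a)),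
      mul_nonneg (sq_nonneg (8*η - 5)) hcb.le]
  · nlinarith [mul_pos (by linarith : (0:ℝ) < 1 - r) hca]

-- case t > η
private lemma case_gt (η t a b c d : ℝ) (hη0 : 0 < η) (hη1 : η < 1)
    (ht1 : t ≤ 1) (ht : η < t)
    (ha : a ≤ max a b) (hb : b ≤ max a b)
    (hd1 : a - b ≤ d) (hd2 : b - a ≤ d)
    (hcm : 0 < c - max a b)
    (hdom : 32/7 * d ≤ c - max a b) :
    |(η ^ 2 - 0) * (c - a) + ((1 - η) ^ 2 - (1 - η / t)) * (c - b)|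
      < η ^ 2 * (c - a) + (1 - η) ^ 2 * (c - b) := by
  set s := η / t with hs
  have ht0 : 0 < t := by linarith
  have hs1 : η ≤ s := by rw [hs, le_div_iff₀ ht0]; nlinarith
  have hs2 : s < 1 := by rw [hs, div_lt_one ht0]; linarith
  have hca : 0 < c - a := by have := le_max_left a b; linarith
  have hcb : 0 < c - b := by have := le_max_right a b; linarith
  rw [abs_lt]
  constructor
  · nlinarith [mul_nonneg (by linarith : (0:ℝ) ≤ s - η) hcb.le,
      mul_nonneg (by nlinarith : (0:ℝ) ≤ 1 - (2*η^2 - 3*η + 1)) (by linarith : (0:ℝ) ≤ d - (a - b)),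
      mul_nonneg (by nlinarith : (0:ℝ) ≤ 1 + (2*η^2 - 3*η + 1)) (by linarith : (0:ℝ) ≤ d + (a - b)),
      mul_nonneg (sq_nonneg (8*η - 3)) hca.le]
  · nlinarith [mul_pos (by linarith : (0:ℝ) < 1 - s) hcb]

theorem stmt_12 (η : ℝ) (hη0 : 0 < η) (hη1 : η < 1)
    (μ₁ μ₂ μ₁₂ : ℕ × ℕ → ℝ)
    (L : Filter (ℕ × ℕ))
    (hL : L = Filter.comap (fun p : ℕ × ℕ => min p.1 p.2) atTop)
    (hdom : ∀ C : ℝ, 0 < C →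
      ∀ᶠ p in L, C * |μ₁ p - μ₂ p| ≤ μ₁₂ p - max (μ₁ p) (μ₂ p))
    (hpos : ∀ p, 0 < μ₁₂ p)
    (hratio : Tendsto (fun p => μ₁₂ p / max (μ₁ p) (μ₂ p)) L atTop)
    (qZ : ℕ × ℕ → ℝ → ℝ)
    (hqZ : ∀ p t, qZ p t =
      (η ^ 2 - (if t ≤ η then 1 - (1 - η) / (1 - t) else 0)) * (μ₁₂ p - μ₁ p)
        + ((1 - η) ^ 2 - (if η < t then 1 - η / t else 0)) * (μ₁₂ p - μ₂ p)) :
    ∀ᶠ p in L, ∀ t ∈ Set.Icc (0 : ℝ) 1, t ≠ η → |qZ p t| < |qZ p η| := by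
  filter_upwards [hdom (32/7) (by norm_num), hratio.eventually (eventually_ge_atTop 2)]
    with p hd hr
  set a := μ₁ p with hA
  set b := μ₂ p with hB
  set c := μ₁₂ p with hC
  have hc : 0 < c := hpos p
  have hm : 0 < max a b := by
    by_contra h
    push_neg at h
    have : c / max a b ≤ 0 := div_nonpos_of_nonneg_of_nonpos hc.le h
    linarith
  have hcm : 0 < c - max a b := by
    rw [le_div_iff₀ hm] at hr
    linarith
  have hd1 : a - b ≤ |a - b| := le_abs_self _
  have hd2 : b - a ≤ |a - b| := by rw [abs_sub_comm]; exact le_abs_self _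
  have hqη : qZ p η = η ^ 2 * (c - a) + (1 - η) ^ 2 * (c - b) := by
    rw [hqZ, if_pos le_rfl, if_neg (lt_irrefl η),
      div_self (by linarith : (1:ℝ) - η ≠ 0)]
    ring
  have hqηpos : 0 < qZ p η := by
    have hca : 0 < c - a := by have := le_max_left a b; linarith
    have hcb : 0 < c - b := by have := le_max_right a b; linarith
    rw [hqη]
    nlinarith [mul_pos (pow_pos hη0 2) hca,
      mul_pos (pow_pos (by linarith : (0:ℝ) < 1 - η) 2) hcb]
  intro t ht hne
  rw [abs_of_pos hqηpos, hqη]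
  rcases le_or_gt t η with hle | hgt
  · have htlt : t < η := lt_of_le_of_ne hle hne
    rw [hqZ, if_pos hle, if_neg (not_lt.mpr hle)]
    exact case_lt η t a b c _ hη0 hη1 ht.1 htlt (le_max_left a b) (le_max_right a b)
      hd1 hd2 hcm hd
  · rw [hqZ, if_neg (not_le.mpr hgt), if_pos hgt]
    exact case_gt η t a b c _ hη0 hη1 ht.2 hgt (le_max_left a b) (le_max_right a b)
      hd1 hd2 hcm hd
end
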